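/- Let β=(β_n)_{n∈ℕ} be a Cantor base with x_β<+∞. The quasi-lazy expansion ℓ*_β(x_β−1) is a β-representation of x_β−1, i.e., val_β(ℓ*_β(x_β−1))=x_β−1. -/

import Mathlib

open Filter Topology

/-- A Cantor real base: a sequence of reals `> 1` whose infinite product diverges to `+∞`. -/
structure IsCantorBase (β : ℕ → ℝ) : Prop where
  one_lt : ∀ n, 1 < β n
  prod_tendsto : Tendsto (fun N => ∏ i ∈ Finset.range N, β i) atTop atTop

/-- The product `β_0 ⋯ β_n`. -/
noncomputable def prodUpTo (β : ℕ → ℝ) (n : ℕ) : ℝ := ∏ i ∈ Finset.range (n + 1), β i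

/-- The shifted base `β^(n) = (β_n, β_{n+1}, …)`. -/
def shiftBase (β : ℕ → ℝ) (n : ℕ) : ℕ → ℝ := fun m => β (n + m)

/-- `x_β = Σ_{n} (⌈β_n⌉ - 1)/(β_0 ⋯ β_n)`. -/
noncomputable def xB (β : ℕ → ℝ) : ℝ := ∑' n, ((⌈β n⌉ : ℝ) - 1) / prodUpTo β n

/-- The condition `x_β < +∞`, i.e. the series defining `x_β` converges. -/
def XBSummable (β : ℕ → ℝ) : Prop :=
  Summable (fun n => ((⌈β n⌉ : ℝ) - 1) / prodUpTo β n)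

/-- `val_β(a) = Σ_n a_n/(β_0 ⋯ β_n)`. -/
noncomputable def valB (β : ℕ → ℝ) (a : ℕ → ℤ) : ℝ := ∑' n, (a n : ℝ) / prodUpTo β n

/-- The digit condition `a_n ∈ [[0, ⌈β_n⌉ - 1]]` for all `n`. -/
def validWord (β : ℕ → ℝ) (a : ℕ → ℤ) : Prop := ∀ n, 0 ≤ a n ∧ a n ≤ ⌈β n⌉ - 1

/-- The flip map `θ_β`. -/
noncomputable def theta (β : ℕ → ℝ) (a : ℕ → ℤ) : ℕ → ℤ := fun n => ⌈β n⌉ - 1 - a n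

/-- The greedy remainders `r_{β,n}(x)`. -/
noncomputable def greedyR (β : ℕ → ℝ) (x : ℝ) : ℕ → ℝ
  | 0 => β 0 * x - (⌊β 0 * x⌋ : ℝ)
  | n + 1 => β (n + 1) * greedyR β x n - (⌊β (n + 1) * greedyR β x n⌋ : ℝ)

/-- The greedy digits `ε_{β,n}(x)`; `greedyDigit β x` is the greedy β-expansion `d_β(x)`. -/
noncomputable def greedyDigit (β : ℕ → ℝ) (x : ℝ) : ℕ → ℤ
  | 0 => ⌊β 0 * x⌋
  | n + 1 => ⌊β (n + 1) * greedyR β x n⌋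

/-- The lazy remainders `s_{β,n}(x)`. -/
noncomputable def lazyS (β : ℕ → ℝ) (x : ℝ) : ℕ → ℝ
  | 0 => β 0 * x - (⌈β 0 * x - xB (shiftBase β 1)⌉ : ℝ)
  | n + 1 => β (n + 1) * lazyS β x n -
      (⌈β (n + 1) * lazyS β x n - xB (shiftBase β (n + 2))⌉ : ℝ)

/-- The lazy digits `ξ_{β,n}(x)`; `lazyDigit β x` is the lazy β-expansion `ℓ_β(x)`. -/
noncomputable def lazyDigit (β : ℕ → ℝ) (x : ℝ) : ℕ → ℤ
  | 0 => ⌈β 0 * x - xB (shiftBase β 1)⌉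
  | n + 1 => ⌈β (n + 1) * lazyS β x n - xB (shiftBase β (n + 2))⌉

/-- Strict lexicographic order on infinite words. -/
def lexLt (a b : ℕ → ℤ) : Prop := ∃ k, (∀ i < k, a i = b i) ∧ a k < b k

/-- Lexicographic order on infinite words. -/
def lexLe (a b : ℕ → ℤ) : Prop := lexLt a b ∨ a = b

/-- `D_β`, the set of greedy β-expansions of points of `[0,1)`. -/
def greedySet (β : ℕ → ℝ) : Set (ℕ → ℤ) :=
  {a | ∃ x ∈ Set.Ico (0 : ℝ) 1, a = greedyDigit β x}

/-- `D'_β`, the set of lazy β-expansions of points of `(x_β - 1, x_β]`. -/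
def lazySet (β : ℕ → ℝ) : Set (ℕ → ℤ) :=
  {a | ∃ x ∈ Set.Ioc (xB β - 1) (xB β), a = lazyDigit β x}

/-- `Δ'_β = ⋃_n D'_{β^(n)}`. -/
def deltaSet (β : ℕ → ℝ) : Set (ℕ → ℤ) := ⋃ n, lazySet (shiftBase β n)

/-!
Every lazy expansion `ℓ_β(x)` with `x ∈ (x_β - 1, x_β]` has digits in `[0, ⌈β_n⌉ - 1]` and value
`x`: both `x` and `x_β` are expanded by the same telescoping recursion, and the lazy remainder
`s_{β,n}(x)` stays within `1` of `x_{β^(n+1)}`, whose quotient by `β_0 ⋯ β_n` is a tail of the series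
`x_β`. Since the series `x_β` dominates the value series of every such word, `val_β` is continuous,
for the product topology, on words with these digit bounds (Tannery's theorem). Hence
`val_β(ℓ*_β(x_β - 1)) = lim val_β(ℓ_β(x)) = lim x = x_β - 1` as `x → (x_β - 1)⁺`.
-/

lemma IsCantorBase.pos {β : ℕ → ℝ} (hβ : IsCantorBase β) (n : ℕ) : 0 < β n :=
  one_pos.trans (hβ.one_lt n)

lemma prodUpTo_pos {β : ℕ → ℝ} (hβ : ∀ n, 0 < β n) (n : ℕ) : 0 < prodUpTo β n :=
  Finset.prod_pos fun i _ => hβ i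

lemma prodUpTo_succ (β : ℕ → ℝ) (n : ℕ) : prodUpTo β (n + 1) = prodUpTo β n * β (n + 1) :=
  Finset.prod_range_succ β (n + 1)

lemma prodUpTo_succ' (β : ℕ → ℝ) (n : ℕ) :
    prodUpTo β (n + 1) = β 0 * prodUpTo (shiftBase β 1) n := by
  rw [prodUpTo, Finset.prod_range_succ', mul_comm]
  simp only [prodUpTo, shiftBase, add_comm 1]

lemma IsCantorBase.tendsto_prodUpTo {β : ℕ → ℝ} (hβ : IsCantorBase β) :
    Tendsto (prodUpTo β) atTop atTop :=
  hβ.prod_tendsto.comp (tendsto_add_atTop_nat 1)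

lemma shiftBase_zero (β : ℕ → ℝ) : shiftBase β 0 = β :=
  funext fun m => congrArg β (zero_add m)

lemma shiftBase_shiftBase (β : ℕ → ℝ) (m n : ℕ) :
    shiftBase (shiftBase β m) n = shiftBase β (m + n) :=
  funext fun k => congrArg β (add_assoc m n k).symm

section Telescoping

variable {β : ℕ → ℝ} {x : ℝ} {d r : ℕ → ℝ}

lemma sum_div_prodUpTo_add_div_prodUpTo (hβ : ∀ n, 0 < β n) (h₀ : β 0 * x = d 0 + r 0)
    (hsucc : ∀ n, β (n + 1) * r n = d (n + 1) + r (n + 1)) (n : ℕ) :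
    ∑ k ∈ Finset.range (n + 1), d k / prodUpTo β k + r n / prodUpTo β n = x := by
  induction n with
  | zero =>
    have := (hβ 0).ne'
    simp only [zero_add, Finset.sum_range_one, prodUpTo, Finset.prod_range_one]
    field_simp
    linarith
  | succ n ih =>
    have hr : r n / prodUpTo β n = (d (n + 1) + r (n + 1)) / prodUpTo β (n + 1) := by
      rw [← hsucc, prodUpTo_succ, mul_comm (prodUpTo β n),
        mul_div_mul_left _ _ (hβ (n + 1)).ne']
    rw [Finset.sum_range_succ, ← ih, hr, add_div]
    ring

lemma tendsto_div_prodUpTo_of_hasSum (hβ : ∀ n, 0 < β n) (h₀ : β 0 * x = d 0 + r 0)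
    (hsucc : ∀ n, β (n + 1) * r n = d (n + 1) + r (n + 1)) {s : ℝ}
    (hs : HasSum (fun k => d k / prodUpTo β k) s) :
    Tendsto (fun n => r n / prodUpTo β n) atTop (𝓝 (x - s)) := by
  have hpartial := (hs.tendsto_sum_nat.comp (tendsto_add_atTop_nat 1)).const_sub x
  refine hpartial.congr fun n => ?_
  rw [Function.comp_apply, ← sum_div_prodUpTo_add_div_prodUpTo hβ h₀ hsucc n]
  ring

end Telescoping

section Tails

variable {β : ℕ → ℝ}

lemma ceil_sub_one_div_prodUpTo_succ (m : ℕ) :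
    ((⌈β (m + 1)⌉ : ℝ) - 1) / prodUpTo β (m + 1)
      = ((⌈shiftBase β 1 m⌉ : ℝ) - 1) / prodUpTo (shiftBase β 1) m / β 0 := by
  rw [prodUpTo_succ', div_div, mul_comm (β 0), shiftBase, add_comm 1]

lemma XBSummable.shiftBase_one (h₀ : β 0 ≠ 0) (hx : XBSummable β) :
    XBSummable (shiftBase β 1) := by
  refine (((summable_nat_add_iff 1).mpr hx).mul_left (β 0)).congr fun m => ?_
  rw [ceil_sub_one_div_prodUpTo_succ, mul_div_cancel₀ _ h₀]

lemma XBSummable.shiftBase (hβ : ∀ n, 0 < β n) (hx : XBSummable β) (n : ℕ) :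
    XBSummable (shiftBase β n) := by
  induction n with
  | zero => rwa [shiftBase_zero]
  | succ n ih => rw [← shiftBase_shiftBase]; exact ih.shiftBase_one (hβ (n + 0)).ne'

lemma mul_xB_eq (h₀ : β 0 ≠ 0) (hx : XBSummable β) :
    β 0 * xB β = ⌈β 0⌉ - 1 + xB (shiftBase β 1) := by
  have htail : ∑' m, ((⌈β (m + 1)⌉ : ℝ) - 1) / prodUpTo β (m + 1) = xB (shiftBase β 1) / β 0 := by
    simp_rw [ceil_sub_one_div_prodUpTo_succ]
    exact tsum_div_const
  rw [xB, hx.tsum_eq_zero_add, htail, prodUpTo, zero_add, Finset.prod_range_one]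
  field_simp

lemma mul_xB_shiftBase (hβ : ∀ n, 0 < β n) (hx : XBSummable β) (n : ℕ) :
    β n * xB (shiftBase β n) = ⌈β n⌉ - 1 + xB (shiftBase β (n + 1)) := by
  have h := mul_xB_eq (hβ (n + 0)).ne' (hx.shiftBase hβ n)
  rwa [shiftBase_shiftBase] at h

lemma tendsto_xB_shiftBase_div_prodUpTo (hβ : ∀ n, 0 < β n) (hx : XBSummable β) :
    Tendsto (fun n => xB (shiftBase β (n + 1)) / prodUpTo β n) atTop (𝓝 0) := by
  have h₀ : β 0 * xB β = ⌈β 0⌉ - 1 + xB (shiftBase β (0 + 1)) := by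
    simpa only [shiftBase_zero] using mul_xB_shiftBase hβ hx 0
  simpa only [xB, sub_self] using
    tendsto_div_prodUpTo_of_hasSum hβ h₀ (fun n => mul_xB_shiftBase hβ hx (n + 1)) hx.hasSum

end Tails

lemma sub_ceil_sub_mem_Ioc (y X : ℝ) : y - ⌈y - X⌉ ∈ Set.Ioc (X - 1) X := by
  have h₁ := Int.le_ceil (y - X)
  have h₂ := Int.ceil_lt_add_one (y - X)
  constructor <;> linarith

lemma ceil_mul_sub_mem_Icc {c X X' b : ℝ} (hc : 0 < c) (hX : c * X = ⌈c⌉ - 1 + X')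
    (hb : b ∈ Set.Ioc (X - 1) X) : ⌈c * b - X'⌉ ∈ Set.Icc 0 (⌈c⌉ - 1) := by
  have hlow : c * (X - 1) < c * b := mul_lt_mul_of_pos_left hb.1 hc
  have hup : c * b ≤ c * X := mul_le_mul_of_nonneg_left hb.2 hc.le
  have hceil := Int.le_ceil c
  constructor
  · have : (-1 : ℤ) < ⌈c * b - X'⌉ := Int.lt_ceil.mpr (by push_cast; linarith)
    omega
  · rw [Int.ceil_le]; push_cast; linarith

lemma norm_div_prodUpTo_le {β : ℕ → ℝ} (hβ : ∀ n, 0 < β n) {a : ℕ → ℤ} (ha : validWord β a)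
    (n : ℕ) : ‖(a n : ℝ) / prodUpTo β n‖ ≤ ((⌈β n⌉ : ℝ) - 1) / prodUpTo β n := by
  have hP := prodUpTo_pos hβ n
  have h₀ : (0 : ℝ) ≤ a n := by exact_mod_cast (ha n).1
  have h₁ : (a n : ℝ) ≤ (⌈β n⌉ : ℝ) - 1 := by exact_mod_cast (ha n).2
  rw [Real.norm_of_nonneg (by positivity)]
  gcongr

lemma tendsto_valB {α : Type*} {β : ℕ → ℝ} (hβ : ∀ n, 0 < β n) (hx : XBSummable β)
    {F : Filter α} {a : α → ℕ → ℤ} {b : ℕ → ℤ} (hab : Tendsto a F (𝓝 b))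
    (hvalid : ∀ᶠ t in F, validWord β (a t)) :
    Tendsto (fun t => valB β (a t)) F (𝓝 (valB β b)) :=
  tendsto_tsum_of_dominated_convergence hx
    (fun k => ((continuous_of_discreteTopology (f := fun z : ℤ => (z : ℝ) / prodUpTo β k)).tendsto
      _).comp (tendsto_pi_nhds.mp hab k))
    (hvalid.mono fun _ ht => norm_div_prodUpTo_le hβ ht)

section Lazy

variable {β : ℕ → ℝ}

lemma lazyS_mem_Ioc (x : ℝ) (n : ℕ) :
    lazyS β x n ∈ Set.Ioc (xB (shiftBase β (n + 1)) - 1) (xB (shiftBase β (n + 1))) := by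
  cases n <;> exact sub_ceil_sub_mem_Ioc _ _

lemma validWord_lazyDigit (hβ : ∀ n, 0 < β n) (hx : XBSummable β) {x : ℝ}
    (hxI : x ∈ Set.Ioc (xB β - 1) (xB β)) : validWord β (lazyDigit β x)
  | 0 => ceil_mul_sub_mem_Icc (hβ 0)
      (by simpa only [shiftBase_zero] using mul_xB_shiftBase hβ hx 0) hxI
  | n + 1 => ceil_mul_sub_mem_Icc (hβ _) (mul_xB_shiftBase hβ hx (n + 1)) (lazyS_mem_Ioc x n)

lemma tendsto_lazyS_div_prodUpTo (hβ : IsCantorBase β) (hx : XBSummable β) (x : ℝ) :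
    Tendsto (fun n => lazyS β x n / prodUpTo β n) atTop (𝓝 0) := by
  have hX := tendsto_xB_shiftBase_div_prodUpTo hβ.pos hx
  have hinv := hβ.tendsto_prodUpTo.inv_tendsto_atTop
  refine tendsto_of_tendsto_of_tendsto_of_le_of_le (by simpa using hX.sub hinv) hX
    (fun n => ?_) (fun n => ?_)
  · calc xB (shiftBase β (n + 1)) / prodUpTo β n - (prodUpTo β n)⁻¹
        = (xB (shiftBase β (n + 1)) - 1) / prodUpTo β n := by ring
      _ ≤ lazyS β x n / prodUpTo β n := by
        gcongr
        · exact (prodUpTo_pos hβ.pos n).le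
        · exact (lazyS_mem_Ioc x n).1.le
  · exact div_le_div_of_nonneg_right (lazyS_mem_Ioc x n).2 (prodUpTo_pos hβ.pos n).le

lemma valB_lazyDigit (hβ : IsCantorBase β) (hx : XBSummable β) {x : ℝ}
    (hxI : x ∈ Set.Ioc (xB β - 1) (xB β)) : valB β (lazyDigit β x) = x := by
  have hsum : Summable fun n => (lazyDigit β x n : ℝ) / prodUpTo β n :=
    hx.of_norm_bounded (norm_div_prodUpTo_le hβ.pos (validWord_lazyDigit hβ.pos hx hxI))
  have h₀ : β 0 * x = lazyDigit β x 0 + lazyS β x 0 := by simp only [lazyDigit, lazyS]; ring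
  have hsucc : ∀ n, β (n + 1) * lazyS β x n = lazyDigit β x (n + 1) + lazyS β x (n + 1) := by
    intro n; simp only [lazyDigit, lazyS]; ring
  have h := tendsto_div_prodUpTo_of_hasSum hβ.pos h₀ hsucc hsum.hasSum
  rw [valB]
  linarith [tendsto_nhds_unique h (tendsto_lazyS_div_prodUpTo hβ hx x)]

end Lazy

/-- the quasi-lazy expansion `ℓ*_β(x_β−1)` is a β-representation of `x_β−1`. -/
theorem quasiLazy_val (β : ℕ → ℝ) (hβ : IsCantorBase β) (hx : XBSummable β)
    (ℓstar : ℕ → ℤ)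
    (hl : Tendsto (lazyDigit β) (nhdsWithin (xB β - 1) (Set.Ioi (xB β - 1))) (nhds ℓstar)) :
    valB β ℓstar = xB β - 1 := by
  have hmem : ∀ᶠ x in 𝓝[>] (xB β - 1), x ∈ Set.Ioc (xB β - 1) (xB β) :=
    Ioc_mem_nhdsGT (by linarith)
  have hval := tendsto_valB hβ.pos hx hl (hmem.mono fun _ hxI => validWord_lazyDigit hβ.pos hx hxI)
  have hid : Tendsto (fun x => valB β (lazyDigit β x)) (𝓝[>] (xB β - 1)) (𝓝 (xB β - 1)) :=
    (tendsto_id.mono_left nhdsWithin_le_nhds).congr'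
      (hmem.mono fun _ hxI => (valB_lazyDigit hβ hx hxI).symm)
  exact tendsto_nhds_unique hval hid
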